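/- Let (γ_n)_{n≥1} be a sequence of positive real numbers with ∑_{n=1}^∞ 2^{−γ_n} = ∞. Then for almost all ω ∈ Ω there exists an infinite sequence of integers N₁ < N₂ < … (depending on ω and (γ_n)) such that M_{N_i} ≥ γ_{N_i} − 1 for every i. -/

import Mathlib

/-!
Put `k n = ⌈γ n - 1⌉₊` and let `A n` be the event that the last `k n + 1` of the first `n`
tosses alternate, so `P (A n) = 2^(-k n) ≥ 2^(-γ n)` and `∑ P (A n) = ∞`. The events are
dependent, but only weakly: for `m ≤ n` the two blocks are either disjoint, and then
independent, or they overlap, and then `A m ∩ A n` forces an alternating block with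
`k m + (n - m)` switches. Hence `P (A m ∩ A n) ≤ P (A m) P (A n) + P (A m) 2^(-(n - m))`, so
`E Z² ≤ S² + 4 S` for `Z = ∑_{n ∈ F} 1_{A n}` and `S = E Z`, and the Chung–Erdős inequality
gives `P (⋃_{n ∈ F} A n) ≥ S / (S + 4)`. Letting `S → ∞` along finite sets of large indices,
almost surely infinitely many `A n` occur, and each witnesses `M_n ≥ k n ≥ γ n - 1`.
-/

open MeasureTheory ProbabilityTheory Filter
open scoped ENNReal

/-- The block of `k + 1` consecutive tosses `X m, …, X (m + k)` (0-based indices) is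
alternating, i.e. it contains `k` switches: every adjacent pair differs. -/
def AltBlock {Ω : Type*} (X : ℕ → Ω → Bool) (ω : Ω) (m k : ℕ) : Prop :=
  ∀ i, m ≤ i → i < m + k → X i ω ≠ X (i + 1) ω

/-- `M_N^{(s+1)}` in the paper's (1-based) notation: the number of switches in the longest
run of consecutive switches in the window `X s, …, X (s + N - 1)` (0-based start `s`),
i.e. the largest `k` such that some block of `k + 1` consecutive tosses within the window
is alternating. -/
noncomputable def longestSwitchIn {Ω : Type*} (X : ℕ → Ω → Bool) (s N : ℕ) (ω : Ω) : ℕ :=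
  sSup {k | ∃ m, s ≤ m ∧ m + k + 1 ≤ s + N ∧ AltBlock X ω m k}

/-- `M_N`: the number of switches in the longest run of consecutive switches among the
first `N` tosses `X 0, …, X (N - 1)` (0-based indexing of the paper's `X_1, …, X_N`). -/
noncomputable def longestSwitch {Ω : Type*} (X : ℕ → Ω → Bool) (N : ℕ) (ω : Ω) : ℕ :=
  longestSwitchIn X 0 N ω

/-- The Chung–Erdős inequality. -/
theorem sq_sum_measure_le_measure_biUnion_mul {Ω ι : Type*} [MeasurableSpace Ω] (μ : Measure Ω)
    (s : Finset ι) {A : ι → Set Ω} (hA : ∀ i, MeasurableSet (A i)) :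
    (∑ i ∈ s, μ (A i)) ^ 2 ≤ μ (⋃ i ∈ s, A i) * ∑ i ∈ s, ∑ j ∈ s, μ (A i ∩ A j) := by
  set U := ⋃ i ∈ s, A i
  set Z : Ω → ℝ≥0∞ := fun ω => ∑ i ∈ s, (A i).indicator 1 ω
  have hU : MeasurableSet U := s.measurableSet_biUnion fun i _ => hA i
  have hZm : Measurable Z := Finset.measurable_sum _ fun i _ => measurable_one.indicator (hA i)
  have hZU : Z * U.indicator 1 = Z := by
    ext ω
    by_cases hω : ω ∈ U
    · simp [hω]
    · have : Z ω = 0 := Finset.sum_eq_zero fun i hi =>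
        Set.indicator_of_notMem (fun h => hω (Set.mem_biUnion hi h)) _
      simp [this]
  have hZ : ∫⁻ ω, Z ω ∂μ = ∑ i ∈ s, μ (A i) := by
    rw [lintegral_finsetSum _ fun i _ => measurable_one.indicator (hA i)]
    simp only [lintegral_indicator_one (hA _)]
  have hmul : ∀ (B C : Set Ω) ω,
      B.indicator (1 : Ω → ℝ≥0∞) ω * C.indicator 1 ω = (B ∩ C).indicator 1 ω :=
    fun B C ω => by rw [Set.inter_indicator_one]; rfl
  have hZ2 : ∫⁻ ω, Z ω ^ (2 : ℝ) ∂μ = ∑ i ∈ s, ∑ j ∈ s, μ (A i ∩ A j) := by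
    simp only [ENNReal.rpow_two, sq, Z, Finset.sum_mul_sum, hmul]
    rw [lintegral_finsetSum _ fun i _ => Finset.measurable_sum _ fun j _ =>
      measurable_one.indicator ((hA i).inter (hA j))]
    refine Finset.sum_congr rfl fun i _ => ?_
    rw [lintegral_finsetSum _ fun j _ => measurable_one.indicator ((hA i).inter (hA j))]
    simp only [lintegral_indicator_one ((hA i).inter (hA _))]
  have hU2 : ∫⁻ ω, U.indicator 1 ω ^ (2 : ℝ) ∂μ = μ U := by
    simp only [ENNReal.rpow_two, sq, hmul, Set.inter_self]
    exact lintegral_indicator_one hU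
  have hCS := ENNReal.lintegral_mul_le_Lp_mul_Lq μ Real.HolderConjugate.two_two
    hZm.aemeasurable (measurable_one.indicator hU).aemeasurable
  rw [hZU, hZ, hZ2, hU2, ← ENNReal.mul_rpow_of_nonneg _ _ (by norm_num)] at hCS
  calc (∑ i ∈ s, μ (A i)) ^ 2
      ≤ (((∑ i ∈ s, ∑ j ∈ s, μ (A i ∩ A j)) * μ U) ^ ((2 : ℕ)⁻¹ : ℝ)) ^ 2 := by
        gcongr; simpa using hCS
    _ = μ U * ∑ i ∈ s, ∑ j ∈ s, μ (A i ∩ A j) := by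
        rw [ENNReal.rpow_inv_natCast_pow two_ne_zero, mul_comm]

lemma sum_ite_inv_two_pow_sub_le_two (F : Finset ℕ) (m : ℕ) :
    ∑ n ∈ F, (if m ≤ n then (2⁻¹ : ℝ≥0∞) ^ (n - m) else 0) ≤ 2 := by
  have hinj : Set.InjOn (· - m) (F.filter (m ≤ ·)) := fun x hx y hy hxy => by
    simp only [Finset.coe_filter, Set.mem_ofPred_eq] at hx hy hxy
    omega
  rw [← Finset.sum_filter, ← Finset.sum_image (g := (· - m)) (f := fun d => (2⁻¹ : ℝ≥0∞) ^ d) hinj]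
  calc _ ≤ ∑' d, (2⁻¹ : ℝ≥0∞) ^ d := ENNReal.sum_le_tsum _
    _ = 2 := by rw [ENNReal.tsum_geometric, ENNReal.one_sub_inv_two, inv_inv]

lemma sum_sum_le_sq_sum_add_four_mul_sum (F : Finset ℕ) (q : ℕ → ℝ≥0∞)
    (p : ℕ → ℕ → ℝ≥0∞) (hsymm : ∀ m n, p m n = p n m)
    (hle : ∀ m ∈ F, ∀ n ∈ F, m ≤ n → p m n ≤ q m * q n + q m * 2⁻¹ ^ (n - m)) :
    ∑ m ∈ F, ∑ n ∈ F, p m n ≤ (∑ n ∈ F, q n) ^ 2 + 4 * ∑ n ∈ F, q n := by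
  set r : ℕ → ℕ → ℝ≥0∞ := fun m n => if m ≤ n then q m * 2⁻¹ ^ (n - m) else 0
  have hpr : ∀ m ∈ F, ∀ n ∈ F, p m n ≤ q m * q n + (r m n + r n m) := by
    intro m hm n hn
    rcases le_or_gt m n with h | h
    · calc p m n ≤ q m * q n + r m n := by simpa [r, h] using hle m hm n hn h
        _ ≤ _ := by gcongr; exact le_self_add
    · calc p m n = p n m := hsymm m n
        _ ≤ q n * q m + r n m := by simpa [r, h.le] using hle n hn m hm h.le
        _ ≤ _ := by rw [mul_comm]; gcongr; exact le_add_self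
  have hr : ∑ m ∈ F, ∑ n ∈ F, r m n ≤ 2 * ∑ n ∈ F, q n := by
    calc ∑ m ∈ F, ∑ n ∈ F, r m n
        = ∑ m ∈ F, q m * ∑ n ∈ F, (if m ≤ n then (2⁻¹ : ℝ≥0∞) ^ (n - m) else 0) := by
          simp only [r, Finset.mul_sum, mul_ite, mul_zero]
      _ ≤ ∑ m ∈ F, q m * 2 := by
          gcongr with m; exact sum_ite_inv_two_pow_sub_le_two F m
      _ = 2 * ∑ n ∈ F, q n := by rw [← Finset.sum_mul, mul_comm]
  calc ∑ m ∈ F, ∑ n ∈ F, p m n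
      ≤ ∑ m ∈ F, ∑ n ∈ F, (q m * q n + (r m n + r n m)) :=
        Finset.sum_le_sum fun m hm => Finset.sum_le_sum fun n hn => hpr m hm n hn
    _ = (∑ n ∈ F, q n) ^ 2 + (∑ m ∈ F, ∑ n ∈ F, r m n + ∑ m ∈ F, ∑ n ∈ F, r m n) := by
        simp only [Finset.sum_add_distrib, sq, Finset.sum_mul_sum]
        rw [Finset.sum_comm (f := fun m n => r n m)]
    _ ≤ (∑ n ∈ F, q n) ^ 2 + (2 * ∑ n ∈ F, q n + 2 * ∑ n ∈ F, q n) := by gcongr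
    _ = (∑ n ∈ F, q n) ^ 2 + 4 * ∑ n ∈ F, q n := by ring

lemma inv_two_pow_succ_add_self (k : ℕ) : (2⁻¹ : ℝ≥0∞) ^ (k + 1) + 2⁻¹ ^ (k + 1) = 2⁻¹ ^ k := by
  rw [pow_succ, ← mul_add, ENNReal.inv_two_add_inv_two, mul_one]

section CoinTosses

variable {Ω : Type*} {X : ℕ → Ω → Bool}

def altPattern (b : Bool) (a i : ℕ) : Bool := xor b (i - a).bodd

lemma altPattern_succ {b : Bool} {a i : ℕ} (h : a ≤ i) :
    altPattern b a (i + 1) = !altPattern b a i := by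
  simp [altPattern, Nat.succ_sub h, Nat.bodd_succ]

lemma altBlock_iff_forall_eq_altPattern {ω : Ω} {a k : ℕ} :
    AltBlock X ω a k ↔ ∀ i ∈ Finset.Icc a (a + k), X i ω = altPattern (X a ω) a i := by
  simp only [Finset.mem_Icc]
  constructor
  · intro h i ⟨hai, hik⟩
    induction i, hai using Nat.le_induction with
    | base => simp [altPattern]
    | succ i hai ih =>
      rw [altPattern_succ hai, ← ih (by omega)]
      exact Bool.eq_not_iff.2 (h i hai (by omega)).symm
  · intro h i hai hik
    rw [h i ⟨hai, by omega⟩, h (i + 1) ⟨by omega, by omega⟩, altPattern_succ hai]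
    simp

lemma setOf_altBlock_eq_iUnion (a k : ℕ) :
    {ω | AltBlock X ω a k} =
      ⋃ b, {ω | ∀ i ∈ Finset.Icc a (a + k), X i ω = altPattern b a i} := by
  ext ω
  simp only [Set.mem_ofPred_eq, Set.mem_iUnion, altBlock_iff_forall_eq_altPattern]
  refine ⟨fun h => ⟨_, h⟩, fun ⟨b, h⟩ => ?_⟩
  have hb : X a ω = b := by simpa [altPattern] using h a (by simp)
  rwa [hb]

lemma AltBlock.of_overlap {ω : Ω} {a₁ k₁ a₂ k₂ K : ℕ} (h₁ : AltBlock X ω a₁ k₁)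
    (h₂ : AltBlock X ω a₂ k₂) (ha : a₂ ≤ a₁ + k₁) (hK : a₁ + K ≤ a₂ + k₂) :
    AltBlock X ω a₁ K := fun i hi hiK => by
  rcases lt_or_ge i (a₁ + k₁) with h | h
  · exact h₁ i hi h
  · exact h₂ i (by omega) (by omega)

lemma le_longestSwitch_of_altBlock {ω : Ω} {m k N : ℕ} (h : AltBlock X ω m k)
    (hN : m + k + 1 ≤ N) : k ≤ longestSwitch X N ω :=
  le_csSup ⟨N, fun _ ⟨_, _, h, _⟩ => by omega⟩ ⟨m, Nat.zero_le _, by simpa using hN, h⟩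

/-- The tosses `X (n - (k + 1)), …, X (n - 1)` alternate (a genuine suffix only if `k < n`). -/
def altSuffix (X : ℕ → Ω → Bool) (k n : ℕ) : Set Ω := {ω | AltBlock X ω (n - (k + 1)) k}

variable [MeasurableSpace Ω] {P : Measure Ω}

lemma measure_forall_eq (hindep : iIndepFun X P) (hfair : ∀ i b, P {ω | X i ω = b} = 1 / 2)
    (s : Finset ℕ) (c : ℕ → Bool) :
    P {ω | ∀ i ∈ s, X i ω = c i} = 2⁻¹ ^ s.card := by
  have hset : {ω | ∀ i ∈ s, X i ω = c i} = ⋂ i ∈ s, X i ⁻¹' {c i} := by ext; simp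
  rw [hset, hindep.meas_biInter fun i _ => ⟨{c i}, measurableSet_singleton _, rfl⟩]
  exact Finset.prod_eq_pow_card fun i _ => (hfair i (c i)).trans (one_div 2)

lemma measure_forall_eq_inter_forall_eq (hindep : iIndepFun X P)
    (hfair : ∀ i b, P {ω | X i ω = b} = 1 / 2) {s t : Finset ℕ} (hst : Disjoint s t)
    (c d : ℕ → Bool) :
    P ({ω | ∀ i ∈ s, X i ω = c i} ∩ {ω | ∀ i ∈ t, X i ω = d i}) =
      2⁻¹ ^ s.card * 2⁻¹ ^ t.card := by
  classical
  have hset : {ω | ∀ i ∈ s, X i ω = c i} ∩ {ω | ∀ i ∈ t, X i ω = d i} =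
      {ω | ∀ i ∈ s ∪ t, X i ω = s.piecewise c d i} := by
    ext ω
    simp only [Set.mem_inter_iff, Set.mem_ofPred_eq, Finset.mem_union]
    refine ⟨fun ⟨hs, ht⟩ i hi => ?_, fun h => ⟨fun i hi => ?_, fun i hi => ?_⟩⟩
    · rcases hi with hi | hi
      · simpa [hi] using hs i hi
      · simpa [Finset.disjoint_right.1 hst hi] using ht i hi
    · simpa [hi] using h i (.inl hi)
    · simpa [Finset.disjoint_right.1 hst hi] using h i (.inr hi)
  rw [hset, measure_forall_eq hindep hfair, Finset.card_union_of_disjoint hst, pow_add]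

lemma measurableSet_altBlock (hmeas : ∀ i, Measurable (X i)) (a k : ℕ) :
    MeasurableSet {ω | AltBlock X ω a k} := by
  simp only [AltBlock, Set.ofPred_forall]
  exact .iInter fun i => .iInter fun _ => .iInter fun _ =>
    (measurableSet_eq_fun (hmeas i) (hmeas (i + 1))).compl

lemma measure_altBlock (hmeas : ∀ i, Measurable (X i)) (hindep : iIndepFun X P)
    (hfair : ∀ i b, P {ω | X i ω = b} = 1 / 2) (a k : ℕ) :
    P {ω | AltBlock X ω a k} = 2⁻¹ ^ k := by
  have hdisj : Pairwise (Function.onFun Disjoint fun b =>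
      {ω | ∀ i ∈ Finset.Icc a (a + k), X i ω = altPattern b a i}) := by
    intro b b' hb
    refine Set.disjoint_left.2 fun ω h h' => hb ?_
    simpa [altPattern] using (h a (by simp)).symm.trans (h' a (by simp))
  have hmeasE : ∀ b : Bool, MeasurableSet
      {ω | ∀ i ∈ Finset.Icc a (a + k), X i ω = altPattern b a i} := fun b => by
    simp only [Set.ofPred_forall]
    exact .iInter fun i => .iInter fun _ => measurableSet_eq_fun (hmeas i) measurable_const
  rw [setOf_altBlock_eq_iUnion, measure_iUnion hdisj hmeasE, tsum_fintype, Fintype.sum_bool]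
  simp only [measure_forall_eq hindep hfair, Nat.card_Icc, add_assoc, Nat.add_sub_cancel_left]
  exact inv_two_pow_succ_add_self k

lemma measure_altBlock_inter_le_of_lt (hindep : iIndepFun X P)
    (hfair : ∀ i b, P {ω | X i ω = b} = 1 / 2) {a₁ k₁ a₂ k₂ : ℕ} (h : a₁ + k₁ < a₂) :
    P ({ω | AltBlock X ω a₁ k₁} ∩ {ω | AltBlock X ω a₂ k₂}) ≤ 2⁻¹ ^ k₁ * 2⁻¹ ^ k₂ := by
  have hdisj : Disjoint (Finset.Icc a₁ (a₁ + k₁)) (Finset.Icc a₂ (a₂ + k₂)) :=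
    Finset.disjoint_left.2 fun i hi hi' => by simp only [Finset.mem_Icc] at hi hi'; omega
  rw [setOf_altBlock_eq_iUnion, setOf_altBlock_eq_iUnion, Set.iUnion_inter_iUnion]
  calc _ ≤ ∑ b₁, ∑ b₂, P ({ω | ∀ i ∈ Finset.Icc a₁ (a₁ + k₁), X i ω = altPattern b₁ a₁ i} ∩
          {ω | ∀ i ∈ Finset.Icc a₂ (a₂ + k₂), X i ω = altPattern b₂ a₂ i}) :=
        (measure_iUnion_fintype_le _ _).trans
          (Finset.sum_le_sum fun _ _ => measure_iUnion_fintype_le _ _)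
    _ = 2⁻¹ ^ k₁ * 2⁻¹ ^ k₂ := by
        simp only [measure_forall_eq_inter_forall_eq hindep hfair hdisj, Nat.card_Icc,
          add_assoc, Nat.add_sub_cancel_left, Fintype.sum_bool, ← inv_two_pow_succ_add_self k₁,
          ← inv_two_pow_succ_add_self k₂]
        ring

lemma measure_altSuffix_inter_le (hmeas : ∀ i, Measurable (X i)) (hindep : iIndepFun X P)
    (hfair : ∀ i b, P {ω | X i ω = b} = 1 / 2) {k l m n : ℕ} (hkm : k < m) (hln : l < n)
    (hmn : m ≤ n) :
    P (altSuffix X k m ∩ altSuffix X l n) ≤ 2⁻¹ ^ k * 2⁻¹ ^ l + 2⁻¹ ^ k * 2⁻¹ ^ (n - m) := by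
  rcases le_or_gt (n - (l + 1)) (m - (k + 1) + k) with h | h
  · calc P (altSuffix X k m ∩ altSuffix X l n)
        ≤ P {ω | AltBlock X ω (m - (k + 1)) (k + (n - m))} :=
          measure_mono fun ω ⟨h₁, h₂⟩ => h₁.of_overlap h₂ h (by omega)
      _ = 2⁻¹ ^ k * 2⁻¹ ^ (n - m) := by rw [measure_altBlock hmeas hindep hfair, pow_add]
      _ ≤ _ := le_add_self
  · exact (measure_altBlock_inter_le_of_lt hindep hfair h).trans le_self_add

lemma le_measure_iUnion_altSuffix_mul (hmeas : ∀ i, Measurable (X i)) (hindep : iIndepFun X P)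
    (hfair : ∀ i b, P {ω | X i ω = b} = 1 / 2) (k : ℕ → ℕ) {F : Finset ℕ}
    (hF : ∀ n ∈ F, k n < n) :
    ∑ n ∈ F, (2⁻¹ : ℝ≥0∞) ^ k n ≤
      P (⋃ n ∈ F, altSuffix X (k n) n) * (∑ n ∈ F, (2⁻¹ : ℝ≥0∞) ^ k n + 4) := by
  set S := ∑ n ∈ F, (2⁻¹ : ℝ≥0∞) ^ k n
  have hpairs : ∑ m ∈ F, ∑ n ∈ F, P (altSuffix X (k m) m ∩ altSuffix X (k n) n) ≤
      S ^ 2 + 4 * S :=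
    sum_sum_le_sq_sum_add_four_mul_sum F _ _ (fun m n => by rw [Set.inter_comm])
      fun m hm n hn hmn => measure_altSuffix_inter_le hmeas hindep hfair (hF m hm) (hF n hn) hmn
  have hsecond := sq_sum_measure_le_measure_biUnion_mul P F
    (A := fun n => altSuffix X (k n) n) fun n => measurableSet_altBlock hmeas _ _
  simp only [show ∀ n, P (altSuffix X (k n) n) = 2⁻¹ ^ k n from
    fun n => measure_altBlock hmeas hindep hfair _ _] at hsecond
  rcases eq_or_ne S 0 with hS | hS
  · simp [hS]
  have hS' : S ≠ ∞ := ENNReal.sum_ne_top.2 fun n _ => by simp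
  refine (ENNReal.mul_le_mul_iff_right hS hS').1 ?_
  calc S * S = S ^ 2 := (sq S).symm
    _ ≤ P (⋃ n ∈ F, altSuffix X (k n) n) * (S ^ 2 + 4 * S) := hsecond.trans (by gcongr)
    _ = S * (P (⋃ n ∈ F, altSuffix X (k n) n) * (S + 4)) := by ring

lemma measure_compl_iUnion_altSuffix_mul_le [IsProbabilityMeasure P]
    (hmeas : ∀ i, Measurable (X i)) (hindep : iIndepFun X P)
    (hfair : ∀ i b, P {ω | X i ω = b} = 1 / 2) (k : ℕ → ℕ) {F : Finset ℕ}
    (hF : ∀ n ∈ F, k n < n) :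
    P (⋃ n ∈ F, altSuffix X (k n) n)ᶜ * ∑ n ∈ F, (2⁻¹ : ℝ≥0∞) ^ k n ≤ 4 := by
  set S := ∑ n ∈ F, (2⁻¹ : ℝ≥0∞) ^ k n
  set U := ⋃ n ∈ F, altSuffix X (k n) n
  have hU : MeasurableSet U := F.measurableSet_biUnion fun n _ => measurableSet_altBlock hmeas _ _
  have hS : S ≠ ∞ := ENNReal.sum_ne_top.2 fun n _ => by simp
  rw [prob_compl_eq_one_sub hU, ENNReal.sub_mul fun _ _ => hS, one_mul, tsub_le_iff_right]
  calc S ≤ P U * (S + 4) := le_measure_iUnion_altSuffix_mul hmeas hindep hfair k hF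
    _ = P U * 4 + P U * S := by rw [mul_add, add_comm]
    _ ≤ 4 + P U * S := by gcongr; exact mul_le_of_le_one_left' prob_le_one

lemma tsum_indicator_inv_two_pow_eq_top {k : ℕ → ℕ} (hk : ∑' n, (2⁻¹ : ℝ≥0∞) ^ k n = ∞)
    (N₀ : ℕ) :
    ∑' n, {n | N₀ ≤ n ∧ k n < n}.indicator (fun n => (2⁻¹ : ℝ≥0∞) ^ k n) n = ∞ := by
  -- the terms left out (`n < N₀` or `n ≤ k n`) are dominated by a convergent geometric series
  have hle : ∀ n, (2⁻¹ : ℝ≥0∞) ^ k n ≤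
      {n | N₀ ≤ n ∧ k n < n}.indicator (fun n => (2⁻¹ : ℝ≥0∞) ^ k n) n + 2 ^ N₀ * 2⁻¹ ^ n := by
    intro n
    by_cases hn : N₀ ≤ n ∧ k n < n
    · simp [hn]
    rw [Set.indicator_of_notMem (show n ∉ {n | N₀ ≤ n ∧ k n < n} from hn), zero_add]
    rcases not_and_or.1 hn with h | h
    · calc (2⁻¹ : ℝ≥0∞) ^ k n ≤ 1 := pow_le_one₀ (by norm_num) (by norm_num)
        _ = 2 ^ n * 2⁻¹ ^ n := by
          rw [← mul_pow, ENNReal.mul_inv_cancel (by norm_num) (by norm_num), one_pow]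
        _ ≤ 2 ^ N₀ * 2⁻¹ ^ n := by gcongr; exacts [one_le_two, by omega]
    · calc (2⁻¹ : ℝ≥0∞) ^ k n ≤ 2⁻¹ ^ n := pow_le_pow_right_of_le_one' (by norm_num) (by omega)
        _ ≤ 2 ^ N₀ * 2⁻¹ ^ n := le_mul_of_one_le_left' (one_le_pow₀ one_le_two)
  have hgeom : ∑' n, (2 : ℝ≥0∞) ^ N₀ * 2⁻¹ ^ n ≠ ∞ := by
    rw [ENNReal.tsum_mul_left, ENNReal.tsum_geometric, ENNReal.one_sub_inv_two, inv_inv]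
    exact ENNReal.mul_ne_top (by simp) (by simp)
  by_contra h
  have := (ENNReal.tsum_le_tsum hle).trans_eq (ENNReal.tsum_add ..)
  rw [hk, top_le_iff] at this
  exact ENNReal.add_ne_top.2 ⟨h, hgeom⟩ this

lemma measure_compl_iUnion_altSuffix_eq_zero [IsProbabilityMeasure P]
    (hmeas : ∀ i, Measurable (X i)) (hindep : iIndepFun X P)
    (hfair : ∀ i b, P {ω | X i ω = b} = 1 / 2) {k : ℕ → ℕ}
    (hk : ∑' n, (2⁻¹ : ℝ≥0∞) ^ k n = ∞) (N₀ : ℕ) :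
    P (⋃ n ∈ {n | N₀ ≤ n ∧ k n < n}, altSuffix X (k n) n)ᶜ = 0 := by
  classical
  set G := {n | N₀ ≤ n ∧ k n < n}
  have hbound : P (⋃ n ∈ G, altSuffix X (k n) n)ᶜ * ∞ ≤ 4 := by
    rw [← tsum_indicator_inv_two_pow_eq_top hk N₀, ENNReal.tsum_eq_iSup_sum, ENNReal.mul_iSup]
    refine iSup_le fun F => ?_
    rw [Finset.sum_indicator_eq_sum_filter]
    calc _ ≤ P (⋃ n ∈ F.filter (fun n => n ∈ G), altSuffix X (k n) n)ᶜ *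
          ∑ n ∈ F.filter (fun n => n ∈ G), (2⁻¹ : ℝ≥0∞) ^ k n := by
          gcongr
          exact Set.iUnion_subset_iUnion_const fun hn => (Finset.mem_filter.1 hn).2
      _ ≤ 4 := measure_compl_iUnion_altSuffix_mul_le hmeas hindep hfair k
          fun n hn => (Finset.mem_filter.1 hn).2.2
  by_contra h
  rw [ENNReal.mul_top h] at hbound
  exact absurd hbound (by simp)

theorem ae_frequently_le_longestSwitch [IsProbabilityMeasure P]
    (hmeas : ∀ i, Measurable (X i)) (hindep : iIndepFun X P)
    (hfair : ∀ i b, P {ω | X i ω = b} = 1 / 2) {k : ℕ → ℕ}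
    (hk : ∑' n, (2⁻¹ : ℝ≥0∞) ^ k n = ∞) :
    ∀ᵐ ω ∂P, ∃ᶠ n in atTop, k n ≤ longestSwitch X n ω := by
  have hall : ∀ᵐ ω ∂P, ∀ N₀, ω ∈ ⋃ n ∈ {n | N₀ ≤ n ∧ k n < n}, altSuffix X (k n) n :=
    ae_all_iff.2 fun N₀ =>
      mem_ae_iff.2 (measure_compl_iUnion_altSuffix_eq_zero hmeas hindep hfair hk N₀)
  filter_upwards [hall] with ω hω
  refine frequently_atTop.2 fun N₀ => ?_
  obtain ⟨n, ⟨hn, hkn⟩, hωn⟩ := Set.mem_iUnion₂.1 (hω N₀)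
  exact ⟨n, hn, le_longestSwitch_of_altBlock hωn (by omega)⟩

end CoinTosses

lemma tsum_inv_two_pow_ceil_sub_one_eq_top {γ : ℕ → ℝ} (hγ : ∀ n, 0 < γ n)
    (hdiv : ¬ Summable fun n => (2 : ℝ) ^ (-γ n)) :
    ∑' n, (2⁻¹ : ℝ≥0∞) ^ ⌈γ n - 1⌉₊ = ∞ := by
  by_contra h
  refine hdiv ((ENNReal.summable_toReal h).of_nonneg_of_le (fun n => by positivity) fun n => ?_)
  have hceil : (⌈γ n - 1⌉₊ : ℝ) ≤ γ n := by
    rcases le_or_gt (γ n) 1 with h1 | h1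
    · rw [Nat.ceil_eq_zero.2 (by linarith), Nat.cast_zero]; exact (hγ n).le
    · linarith [Nat.ceil_lt_add_one (show 0 ≤ γ n - 1 by linarith)]
  calc (2 : ℝ) ^ (-γ n) ≤ 2 ^ (-(⌈γ n - 1⌉₊ : ℝ)) :=
        Real.rpow_le_rpow_of_exponent_le one_le_two (neg_le_neg hceil)
    _ = ((2⁻¹ : ℝ≥0∞) ^ ⌈γ n - 1⌉₊).toReal := by
        rw [Real.rpow_neg zero_le_two, Real.rpow_natCast, ENNReal.toReal_pow, ENNReal.toReal_inv,
          ENNReal.toReal_ofNat, inv_pow]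

/-- If `(γ_n)` are positive reals with `∑ 2^(−γ_n) = ∞`, then almost surely there are
infinitely many `N` with `M_N ≥ γ_N − 1`. -/
theorem longestSwitch_ge_gamma_infinitely_often {Ω : Type*} [MeasurableSpace Ω] (P : Measure Ω) [IsProbabilityMeasure P]
    (X : ℕ → Ω → Bool) (hmeas : ∀ i, Measurable (X i))
    (hindep : iIndepFun X P)
    (hfair : ∀ i b, P {ω | X i ω = b} = 1 / 2)
    (γ : ℕ → ℝ) (hγ : ∀ n, 0 < γ n)
    (hdiv : ¬ Summable (fun n => (2 : ℝ) ^ (-γ n))) :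
    ∀ᵐ ω ∂P, ∃ᶠ N : ℕ in atTop, γ N - 1 ≤ (longestSwitch X N ω : ℝ) := by
  filter_upwards [ae_frequently_le_longestSwitch hmeas hindep hfair
    (tsum_inv_two_pow_ceil_sub_one_eq_top hγ hdiv)] with ω hω
  refine hω.mono fun n hn => ?_
  calc γ n - 1 ≤ ⌈γ n - 1⌉₊ := Nat.le_ceil _
    _ ≤ longestSwitch X n ω := by exact_mod_cast hn
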